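/- arXiv:cs/0007033 — 14 statements merged into one kernel-verified Lean document; each statement's English description precedes it below -/
import Mathlib

section
/- Let ≼ be a partial entrenchment on B and let a ∈ B. The following are equivalent: (i) Fmax(a) = ∅; (ii) ⊤ ≼ aᶜ; (iii) a ⊢~ ⊥ (i.e., ⊥ lies in the sceptical extension of a). -/
variable {B : Type*} [BooleanAlgebra B]

/-- A partial entrenchment: Transitivity, Dominance, Conjunction. -/
def PartialEntrenchment (r : B → B → Prop) : Prop :=
  (∀ a b c : B, r a b → r b c → r a c) ∧
  (∀ a b : B, a ≤ b → r a b) ∧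
  (∀ a b c : B, r c a → r c b → r c (a ⊓ b))

/-- A ≼-filter: nonempty, proper, upper-closed under ≼, closed under meet. -/
def IsEntFilter (r : B → B → Prop) (F : Set B) : Prop :=
  F.Nonempty ∧ F ≠ Set.univ ∧
  (∀ a b : B, a ∈ F → r a b → b ∈ F) ∧
  (∀ a b : B, a ∈ F → b ∈ F → a ⊓ b ∈ F)

/-- Coh(a) = {b | ¬ b ≼ aᶜ}. -/
def Coh (r : B → B → Prop) (a : B) : Set B := {b | ¬ r b aᶜ}

/-- The base F(a): all ≼-filters contained in Coh(a). -/
def entBase (r : B → B → Prop) (a : B) : Set (Set B) :=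
  {F | IsEntFilter r F ∧ F ⊆ Coh r a}

/-- The maximal base Fmax(a): ⊆-maximal members of the base. -/
def entMaxBase (r : B → B → Prop) (a : B) : Set (Set B) :=
  {F | F ∈ entBase r a ∧ ∀ F' ∈ entBase r a, F ⊆ F' → F = F'}

/-- Maxiconsistent inference: a ⊢~ b iff every F ∈ Fmax(a) has f ∈ F with f ⊓ a ≤ b. -/
def MaxInfer (r : B → B → Prop) (a b : B) : Prop :=
  ∀ F ∈ entMaxBase r a, ∃ f ∈ F, f ⊓ a ≤ b

theorem stmt3 (r : B → B → Prop) (hr : PartialEntrenchment r) (a : B) :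
    (entMaxBase r a = ∅ ↔ r ⊤ aᶜ) ∧ (entMaxBase r a = ∅ ↔ MaxInfer r a ⊥) := by
  obtain ⟨htr, hdom, hconj⟩ := hr
  -- key: entMaxBase empty ↔ r ⊤ aᶜ
  have key : entMaxBase r a = ∅ ↔ r ⊤ aᶜ := by
    constructor
    · intro hemp
      by_contra htop
      -- F₀ = {b | r ⊤ b} is in entBase
      have hF0 : ({b | r ⊤ b} : Set B) ∈ entBase r a := by
        refine ⟨⟨⟨⊤, hdom ⊤ ⊤ le_rfl⟩, ?_, ?_, ?_⟩, ?_⟩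
        · intro h
          exact htop (Set.eq_univ_iff_forall.mp h aᶜ)
        · intro x y hx hxy; exact htr ⊤ x y hx hxy
        · intro x y hx hy; exact hconj x y ⊤ hx hy
        · intro b hb hba; exact htop (htr ⊤ b aᶜ hb hba)
      -- Zorn
      have hz : ∃ m, ({b | r ⊤ b} : Set B) ⊆ m ∧ m ∈ entBase r a ∧
          ∀ F' ∈ entBase r a, m ⊆ F' → m = F' := by
        obtain ⟨m, hm⟩ := zorn_subset_nonempty (entBase r a) (fun c hc hchain hcne => by
          obtain ⟨F1, hF1⟩ := hcne
          refine ⟨⋃₀ c, ⟨⟨?_, ?_, ?_, ?_⟩, ?_⟩, fun s hs => Set.subset_sUnion_of_mem hs⟩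
          · obtain ⟨x, hx⟩ := ((hc hF1).1).1
            exact ⟨x, F1, hF1, hx⟩
          · intro h
            have : aᶜ ∈ ⋃₀ c := Set.eq_univ_iff_forall.mp h aᶜ
            obtain ⟨F, hF, hmem⟩ := this
            exact (hc hF).2 hmem (hdom aᶜ aᶜ le_rfl)
          · rintro x y ⟨F, hF, hx⟩ hxy
            exact ⟨F, hF, ((hc hF).1).2.2.1 x y hx hxy⟩
          · rintro x y ⟨F, hF, hx⟩ ⟨G, hG, hy⟩
            rcases hchain.total hF hG with h | h
            · exact ⟨G, hG, ((hc hG).1).2.2.2 x y (h hx) hy⟩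
            · exact ⟨F, hF, ((hc hF).1).2.2.2 x y hx (h hy)⟩
          · rintro b ⟨F, hF, hb⟩
            exact (hc hF).2 hb) _ hF0
        exact ⟨m, hm.1, hm.2.1, fun F' hF' hsub => (subset_antisymm hsub (hm.2.2 hF' hsub))⟩
      obtain ⟨m, _, hmB, hmax⟩ := hz
      have : m ∈ entMaxBase r a := ⟨hmB, hmax⟩
      rw [hemp] at this
      exact this
    · intro htop
      ext F
      simp only [Set.mem_empty_iff_false, iff_false]
      rintro ⟨⟨⟨⟨f, hf⟩, _, _, _⟩, hsub⟩, _⟩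
      exact hsub hf (htr f ⊤ aᶜ (hdom f ⊤ le_top) htop)
  refine ⟨key, ⟨fun h => ?_, fun h => ?_⟩⟩
  · intro F hF
    rw [h] at hF
    exact absurd hF (Set.notMem_empty F)
  · by_contra hne
    obtain ⟨F, hF⟩ := Set.nonempty_iff_ne_empty.mpr hne
    obtain ⟨f, hfF, hle⟩ := h F hF
    have hfc : f ≤ aᶜ := by
      rw [le_compl_iff_disjoint_right, disjoint_iff_inf_le]
      exact hle
    exact hF.1.2 hfF (hdom f aᶜ hfc)
end

section
/- Let ≼ be a partial entrenchment on B. For all a, b ∈ B, F(a ⊔ b) = F(a) ∪ F(b). -/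
variable {B : Type*} [BooleanAlgebra B]

theorem stmt5 (r : B → B → Prop) (hr : PartialEntrenchment r) (a b : B) :
    entBase r (a ⊔ b) = entBase r a ∪ entBase r b := by
  obtain ⟨htr, hdom, hconj⟩ := hr
  ext F
  constructor
  · rintro ⟨hF, hsub⟩
    by_contra h
    simp only [Set.mem_union, not_or] at h
    obtain ⟨h1, h2⟩ := h
    have h1' : ¬ F ⊆ Coh r a := fun hc => h1 ⟨hF, hc⟩
    have h2' : ¬ F ⊆ Coh r b := fun hc => h2 ⟨hF, hc⟩
    simp only [Set.not_subset] at h1' h2'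
    obtain ⟨x, hx, hxa⟩ := h1'
    obtain ⟨y, hy, hyb⟩ := h2'
    simp only [Coh, Set.mem_setOf_eq, not_not] at hxa hyb
    have hxy : x ⊓ y ∈ F := hF.2.2.2 x y hx hy
    have hra : r (x ⊓ y) aᶜ := htr _ _ _ (hdom _ _ inf_le_left) hxa
    have hrb : r (x ⊓ y) bᶜ := htr _ _ _ (hdom _ _ inf_le_right) hyb
    have : r (x ⊓ y) (a ⊔ b)ᶜ := by
      rw [compl_sup]; exact hconj _ _ _ hra hrb
    exact hsub hxy this
  · rintro (⟨hF, hsub⟩ | ⟨hF, hsub⟩) <;> refine ⟨hF, fun x hx hr' => hsub hx ?_⟩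
    · exact htr _ _ _ hr' (hdom _ _ (compl_le_compl le_sup_left))
    · exact htr _ _ _ hr' (hdom _ _ (compl_le_compl le_sup_right))
end

section
/- Let ≼ be a partial entrenchment on B. For all a, b ∈ B, Fmax(a ⊔ b) = (Fmax(a) ∩ Fmax(b)) ∪ (Fmax(a) \ F(b)) ∪ (Fmax(b) \ F(a)). -/
variable {B : Type*} [BooleanAlgebra B]

theorem stmt6 (r : B → B → Prop) (hr : PartialEntrenchment r) (a b : B) :
    entMaxBase r (a ⊔ b) =
      (entMaxBase r a ∩ entMaxBase r b) ∪
      (entMaxBase r a \ entBase r b) ∪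
      (entMaxBase r b \ entBase r a) := by
  obtain ⟨htr, hdom, hconj⟩ := hr
  -- Step 1: the base of a ⊔ b is the union of the bases.
  have hbase : entBase r (a ⊔ b) = entBase r a ∪ entBase r b := by
    ext F
    constructor
    · rintro ⟨hF, hsub⟩
      by_cases ha : F ⊆ Coh r a
      · exact Or.inl ⟨hF, ha⟩
      · refine Or.inr ⟨hF, ?_⟩
        intro g hg hgb
        obtain ⟨f, hf, hfa⟩ := Set.not_subset.mp ha
        have hfa' : r f aᶜ := not_not.mp hfa
        have hmem : f ⊓ g ∈ F := hF.2.2.2 f g hf hg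
        have h1 : r (f ⊓ g) aᶜ := htr _ _ _ (hdom _ _ inf_le_left) hfa'
        have h2 : r (f ⊓ g) bᶜ := htr _ _ _ (hdom _ _ inf_le_right) hgb
        have h3 : r (f ⊓ g) (aᶜ ⊓ bᶜ) := hconj _ _ _ h1 h2
        exact hsub hmem (by rw [compl_sup]; exact h3)
    · rintro (⟨hF, hsub⟩ | ⟨hF, hsub⟩)
      · refine ⟨hF, fun f hf hc => ?_⟩
        rw [show (a ⊔ b)ᶜ = aᶜ ⊓ bᶜ from compl_sup] at hc
        exact hsub hf (htr _ _ _ hc (hdom _ _ inf_le_left))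
      · refine ⟨hF, fun f hf hc => ?_⟩
        rw [show (a ⊔ b)ᶜ = aᶜ ⊓ bᶜ from compl_sup] at hc
        exact hsub hf (htr _ _ _ hc (hdom _ _ inf_le_right))
  -- Step 2: maximal elements of a union.
  ext F
  simp only [entMaxBase, Set.mem_setOf_eq, hbase, Set.mem_union, Set.mem_inter_iff,
    Set.mem_diff]
  constructor
  · rintro ⟨(hFa | hFb), hmax⟩
    · have hmaxa : ∀ F' ∈ entBase r a, F ⊆ F' → F = F' :=
        fun F' hF' hss => hmax F' (Or.inl hF') hss
      by_cases hFb : F ∈ entBase r b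
      · exact Or.inl (Or.inl ⟨⟨hFa, hmaxa⟩, hFb,
          fun F' hF' hss => hmax F' (Or.inr hF') hss⟩)
      · exact Or.inl (Or.inr ⟨⟨hFa, hmaxa⟩, hFb⟩)
    · have hmaxb : ∀ F' ∈ entBase r b, F ⊆ F' → F = F' :=
        fun F' hF' hss => hmax F' (Or.inr hF') hss
      by_cases hFa : F ∈ entBase r a
      · exact Or.inl (Or.inl ⟨⟨hFa,
          fun F' hF' hss => hmax F' (Or.inl hF') hss⟩, ⟨hFb, hmaxb⟩⟩)
      · exact Or.inr ⟨⟨hFb, hmaxb⟩, hFa⟩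
  · rintro ((⟨⟨hFa, hmaxa⟩, hFb, hmaxb⟩ | ⟨⟨hFa, hmaxa⟩, hFb⟩) | ⟨⟨hFb, hmaxb⟩, hFa⟩)
    · exact ⟨Or.inl hFa, fun F' hF' hss => hF'.elim (fun h => hmaxa F' h hss)
        (fun h => hmaxb F' h hss)⟩
    · refine ⟨Or.inl hFa, fun F' hF' hss => ?_⟩
      rcases hF' with h | h
      · exact hmaxa F' h hss
      · exact absurd ⟨hFa.1, hss.trans h.2⟩ hFb
    · refine ⟨Or.inr hFb, fun F' hF' hss => ?_⟩
      rcases hF' with h | h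
      · exact absurd ⟨hFb.1, hss.trans h.2⟩ hFa
      · exact hmaxb F' h hss
end

section
/- Let ≼ be a partial entrenchment on B. For all a, b ∈ B, if a ⊢~ b then F(a) = F(a ⊓ b), and consequently Fmax(a) = Fmax(a ⊓ b). -/
variable {B : Type*} [BooleanAlgebra B]

theorem stmt7 (r : B → B → Prop) (hr : PartialEntrenchment r) (a b : B)
    (h : MaxInfer r a b) :
    entBase r a = entBase r (a ⊓ b) ∧ entMaxBase r a = entMaxBase r (a ⊓ b) := by
  obtain ⟨htr, hdom, hconj⟩ := hr
  -- Zorn: every member of the base extends to a maximal one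
  have hzorn : ∀ F ∈ entBase r a, ∃ M ∈ entMaxBase r a, F ⊆ M := by
    intro F hF
    obtain ⟨M, hFM, hMmem, hMmax⟩ := zorn_subset_nonempty (entBase r a)
      (fun c hcS hchain hcne => by
        obtain ⟨s, hs⟩ := hcne
        obtain ⟨⟨⟨x, hx⟩, _, _, _⟩, _⟩ := hcS hs
        refine ⟨⋃₀ c, ⟨⟨⟨x, Set.mem_sUnion.2 ⟨s, hs, hx⟩⟩, ?_, ?_, ?_⟩, ?_⟩,
          fun t ht => Set.subset_sUnion_of_mem ht⟩
        · intro hU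
          have hmem : aᶜ ∈ ⋃₀ c := hU ▸ Set.mem_univ _
          obtain ⟨t, htc, hat⟩ := Set.mem_sUnion.1 hmem
          exact (hcS htc).2 hat (hdom _ _ le_rfl)
        · rintro x y hx hxy
          obtain ⟨t, htc, hxt⟩ := Set.mem_sUnion.1 hx
          exact Set.mem_sUnion.2 ⟨t, htc, ((hcS htc).1.2.2.1 _ _ hxt hxy)⟩
        · rintro x y hx hy
          obtain ⟨t, htc, hxt⟩ := Set.mem_sUnion.1 hx
          obtain ⟨u, huc, hyu⟩ := Set.mem_sUnion.1 hy
          rcases hchain.total htc huc with htu | hut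
          · exact Set.mem_sUnion.2 ⟨u, huc, (hcS huc).1.2.2.2 _ _ (htu hxt) hyu⟩
          · exact Set.mem_sUnion.2 ⟨t, htc, (hcS htc).1.2.2.2 _ _ hxt (hut hyu)⟩
        · intro y hy
          obtain ⟨t, htc, hyt⟩ := Set.mem_sUnion.1 hy
          exact (hcS htc).2 hyt) F hF
    exact ⟨M, ⟨hMmem, fun F' hF' hMF' => hMF'.antisymm (hMmax hF' hMF')⟩, hFM⟩
  have key : (a ⊓ b)ᶜ ⊓ (b ⊔ aᶜ) ≤ aᶜ := by
    rw [compl_inf, inf_sup_left]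
    refine sup_le ?_ inf_le_right
    rw [inf_sup_right]
    simp
  -- the two bases are equal
  have hbase : entBase r a = entBase r (a ⊓ b) := by
    apply Set.Subset.antisymm
    · rintro F ⟨hF, hFc⟩
      refine ⟨hF, fun x hx => ?_⟩
      intro hxr
      -- extend F to a maximal M, get f with f ⊓ a ≤ b
      obtain ⟨M, hMmax, hFM⟩ := hzorn F ⟨hF, hFc⟩
      obtain ⟨f, hfM, hfab⟩ := h M hMmax
      have hM : IsEntFilter r M := hMmax.1.1
      have hfx : f ⊓ x ∈ M := hM.2.2.2 _ _ hfM (hFM hx)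
      have h1 : r (f ⊓ x) (a ⊓ b)ᶜ := htr _ _ _ (hdom _ _ inf_le_right) hxr
      have h2 : r (f ⊓ x) (b ⊔ aᶜ) := by
        apply hdom
        calc f ⊓ x ≤ f := inf_le_left
          _ ≤ b ⊔ aᶜ := by
            rw [← le_himp_iff, himp_eq] at hfab
            exact hfab
      have h3 : r (f ⊓ x) aᶜ := htr _ _ _ (hconj _ _ _ h1 h2) (hdom _ _ key)
      exact hMmax.1.2 hfx h3
    · rintro F ⟨hF, hFc⟩
      refine ⟨hF, fun x hx => ?_⟩
      intro hxr
      exact hFc hx (htr _ _ _ hxr (hdom _ _ (compl_le_compl inf_le_left)))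
  exact ⟨hbase, by rw [entMaxBase, entMaxBase, hbase]⟩
end

section
/- Let ≼ be a partial entrenchment on B. For all a, b ∈ B: it is not the case that a ⊢~ bᶜ if and only if Fmax(a) ∩ Fmax(a ⊓ b) ≠ ∅. (Equivalently: a is consistent with b under maxiconsistent inference exactly when some maximal base element for a is also a maximal base element for a ⊓ b.) -/
variable {B : Type*} [BooleanAlgebra B]

lemma inf_le_compl_iff (f a b : B) : f ⊓ a ≤ bᶜ ↔ f ≤ (a ⊓ b)ᶜ := by
  rw [compl_inf, sup_comm, ← himp_eq, le_himp_iff]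

theorem stmt8 (r : B → B → Prop) (hr : PartialEntrenchment r) (a b : B) :
    ¬ MaxInfer r a bᶜ ↔ (entMaxBase r a ∩ entMaxBase r (a ⊓ b)).Nonempty := by
  obtain ⟨htrans, hdom, hconj⟩ := hr
  -- Coh (a ⊓ b) ⊆ Coh a
  have hcoh : Coh r (a ⊓ b) ⊆ Coh r a := by
    intro c hc hca
    exact hc (htrans c aᶜ (a ⊓ b)ᶜ hca (hdom _ _ (compl_le_compl inf_le_left)))
  constructor
  · intro h
    simp only [MaxInfer, not_forall] at h
    obtain ⟨F, hF, hno⟩ := h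
    push_neg at hno
    -- F ⊆ Coh (a ⊓ b)
    have hsub : F ⊆ Coh r (a ⊓ b) := by
      intro f hf hrf
      have hmem : (a ⊓ b)ᶜ ∈ F := hF.1.1.2.2.1 f _ hf hrf
      have : (a ⊓ b)ᶜ ⊓ a ≤ bᶜ := by
        rw [inf_le_compl_iff]
      exact hno _ hmem this
    have hbase : F ∈ entBase r (a ⊓ b) := ⟨hF.1.1, hsub⟩
    refine ⟨F, hF, hbase, ?_⟩
    intro F' hF' hFF'
    exact hF.2 F' ⟨hF'.1, hF'.2.trans hcoh⟩ hFF'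
  · rintro ⟨F, hFa, hFab⟩
    intro hmax
    obtain ⟨f, hf, hle⟩ := hmax F hFa
    have : f ∈ Coh r (a ⊓ b) := hFab.1.2 hf
    exact this (hdom _ _ ((inf_le_compl_iff f a b).mp hle))
end

section
/- Let ≼ be a partial entrenchment on B. The maxiconsistent inference relation ⊢~ satisfies Supraclassicality (a ≤ b implies a ⊢~ b), Right Weakening (a ⊢~ b and b ≤ c imply a ⊢~ c), And (a ⊢~ b and a ⊢~ c imply a ⊢~ b ⊓ c), and Cut (a ⊢~ b and a ⊓ b ⊢~ c imply a ⊢~ c). -/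
variable {B : Type*} [BooleanAlgebra B]

theorem stmt9 (r : B → B → Prop) (hr : PartialEntrenchment r) :
    (∀ a b : B, a ≤ b → MaxInfer r a b) ∧
    (∀ a b c : B, MaxInfer r a b → b ≤ c → MaxInfer r a c) ∧
    (∀ a b c : B, MaxInfer r a b → MaxInfer r a c → MaxInfer r a (b ⊓ c)) ∧
    (∀ a b c : B, MaxInfer r a b → MaxInfer r (a ⊓ b) c → MaxInfer r a c) := by
  obtain ⟨htr, hdom, hconj⟩ := hr
  refine ⟨?_, ?_, ?_, ?_⟩
  · intro a b hab F hF
    obtain ⟨⟨⟨⟨f, hf⟩, _, _, _⟩, _⟩, _⟩ := hF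
    exact ⟨f, hf, le_trans (le_trans inf_le_right hab) le_rfl⟩
  · intro a b c hab hbc F hF
    obtain ⟨f, hf, hle⟩ := hab F hF
    exact ⟨f, hf, le_trans hle hbc⟩
  · intro a b c hab hac F hF
    obtain ⟨f, hf, hfle⟩ := hab F hF
    obtain ⟨g, hg, hgle⟩ := hac F hF
    obtain ⟨⟨⟨_, _, _, hmeet⟩, _⟩, _⟩ := hF
    refine ⟨f ⊓ g, hmeet f g hf hg, le_inf ?_ ?_⟩
    · exact le_trans (inf_le_inf_right a inf_le_left) hfle
    · exact le_trans (inf_le_inf_right a inf_le_right) hgle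
  · intro a b c hab habc F hF
    obtain ⟨f, hf, hfle⟩ := hab F hF
    obtain ⟨⟨⟨hne, hprop, hup, hmeet⟩, hcoh⟩, hmax⟩ := hF
    -- F ∈ entMaxBase r (a ⊓ b)
    have hcoh' : F ⊆ Coh r (a ⊓ b) := by
      intro g hg hgr
      have hgf : g ⊓ f ∈ F := hmeet g f hg hf
      have h1 : r (g ⊓ f) (a ⊓ b)ᶜ := htr _ _ _ (hdom _ _ inf_le_left) hgr
      have hfc : f ≤ aᶜ ⊔ b := by
        have : f ≤ a ⇨ b := le_himp_iff.mpr hfle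
        rwa [himp_eq, sup_comm] at this
      have h2 : r (g ⊓ f) (aᶜ ⊔ b) := htr _ _ _ (hdom _ _ inf_le_right) (hdom _ _ hfc)
      have h3 : r (g ⊓ f) ((a ⊓ b)ᶜ ⊓ (aᶜ ⊔ b)) := hconj _ _ _ h1 h2
      have h4 : (a ⊓ b)ᶜ ⊓ (aᶜ ⊔ b) ≤ aᶜ := by
        rw [compl_inf, ← sup_inf_left]
        simp
      exact hcoh hgf (htr _ _ _ h3 (hdom _ _ h4))
    have hbase' : Coh r (a ⊓ b) ⊆ Coh r a := by
      intro g hg hgr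
      exact hg (htr _ _ _ hgr (hdom _ _ (by rw [compl_inf]; exact le_sup_left)))
    have hFmax' : F ∈ entMaxBase r (a ⊓ b) := by
      refine ⟨⟨⟨hne, hprop, hup, hmeet⟩, hcoh'⟩, ?_⟩
      intro F' hF' hFF'
      exact hmax F' ⟨hF'.1, fun x hx => hbase' (hF'.2 hx)⟩ hFF'
    obtain ⟨g, hg, hgle⟩ := habc F hFmax'
    refine ⟨f ⊓ g, hmeet f g hf hg, ?_⟩
    have : f ⊓ g ⊓ a ≤ g ⊓ (a ⊓ b) := by
      refine le_inf (le_trans inf_le_left inf_le_right) (le_inf inf_le_right ?_)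
      exact le_trans (inf_le_inf_right a (inf_le_left)) hfle
    exact le_trans this hgle
end

section
/- Let ≼ be a partial entrenchment on B. The maxiconsistent inference relation ⊢~ satisfies Cautious Monotonicity (a ⊢~ b and a ⊢~ c imply a ⊓ b ⊢~ c) and Or (a ⊢~ c and b ⊢~ c imply a ⊔ b ⊢~ c). Hence, together with Supraclassicality, Right Weakening, And and Cut, ⊢~ is a preferential inference relation. -/
variable {B : Type*} [BooleanAlgebra B]

/-- A preferential inference relation: Supraclassicality, Right Weakening, And,
Cut, Cautious Monotonicity, Or. -/
def Preferential (s : B → B → Prop) : Prop :=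
  (∀ a b : B, a ≤ b → s a b) ∧
  (∀ a b c : B, s a b → b ≤ c → s a c) ∧
  (∀ a b c : B, s a b → s a c → s a (b ⊓ c)) ∧
  (∀ a b c : B, s a b → s (a ⊓ b) c → s a c) ∧
  (∀ a b c : B, s a b → s a c → s (a ⊓ b) c) ∧
  (∀ a b c : B, s a c → s b c → s (a ⊔ b) c)

section Aux

variable {r : B → B → Prop}

lemma compl_not_mem_coh (hr : PartialEntrenchment r) (a : B) : aᶜ ∉ Coh r a :=
  fun h => h (hr.2.1 _ _ le_rfl)

lemma coh_mono (hr : PartialEntrenchment r) {a b : B} (h : a ≤ b) :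
    Coh r a ⊆ Coh r b := fun t ht hrt =>
  ht (hr.1 _ _ _ hrt (hr.2.1 _ _ (compl_le_compl h)))

lemma base_mono (hr : PartialEntrenchment r) {a b : B} (h : a ≤ b) :
    entBase r a ⊆ entBase r b := fun _F hF => ⟨hF.1, hF.2.trans (coh_mono hr h)⟩

/-- membership + maximality in a bigger base gives maximality. -/
lemma max_of_mem_base (hr : PartialEntrenchment r) {a b : B} {F : Set B}
    (hF : F ∈ entMaxBase r b) (hmem : F ∈ entBase r a) (h : a ≤ b) :
    F ∈ entMaxBase r a :=
  ⟨hmem, fun F' hF' hFF' => hF.2 F' (base_mono hr h hF') hFF'⟩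

/-- Zorn: every base element extends to a maximal one. -/
lemma exists_max (hr : PartialEntrenchment r) {a : B} {F : Set B}
    (hF : F ∈ entBase r a) : ∃ M ∈ entMaxBase r a, F ⊆ M := by
  have H : ∀ c ⊆ entBase r a, IsChain (· ⊆ ·) c → c.Nonempty →
      ∃ ub ∈ entBase r a, ∀ s ∈ c, s ⊆ ub := by
    rintro c hcS hchain ⟨F0, hF0⟩
    refine ⟨⋃₀ c, ⟨⟨⟨?_, ?_, ?_, ?_⟩, ?_⟩, fun s hs => Set.subset_sUnion_of_mem hs⟩⟩
    · obtain ⟨x, hx⟩ := (hcS hF0).1.1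
      exact ⟨x, F0, hF0, hx⟩
    · intro h
      have : aᶜ ∈ ⋃₀ c := h ▸ Set.mem_univ _
      obtain ⟨G, hG, hmem⟩ := this
      exact compl_not_mem_coh hr a ((hcS hG).2 hmem)
    · rintro x y ⟨G, hG, hx⟩ hxy
      exact ⟨G, hG, (hcS hG).1.2.2.1 _ _ hx hxy⟩
    · rintro x y ⟨G, hG, hx⟩ ⟨H, hH, hy⟩
      rcases hchain.total hG hH with hGH | hHG
      · exact ⟨H, hH, (hcS hH).1.2.2.2 _ _ (hGH hx) hy⟩
      · exact ⟨G, hG, (hcS hG).1.2.2.2 _ _ hx (hHG hy)⟩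
    · rintro x ⟨G, hG, hx⟩
      exact (hcS hG).2 hx
  obtain ⟨M, hFM, hMmem, hMmax⟩ := zorn_subset_nonempty (entBase r a) H F hF
  exact ⟨M, ⟨hMmem, fun F' hF' hMF' => hMF'.antisymm (hMmax hF' hMF')⟩, hFM⟩

/-- Key lemma: a maximal base element for `a` with a witness `f ⊓ a ≤ b`
is a maximal base element for `a ⊓ b`. -/
lemma max_inf (hr : PartialEntrenchment r) {a b : B} {F : Set B}
    (hF : F ∈ entMaxBase r a) {f : B} (hfF : f ∈ F) (hfab : f ⊓ a ≤ b) :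
    F ∈ entMaxBase r (a ⊓ b) := by
  obtain ⟨tr, dom, conj⟩ := hr
  have hmem : F ∈ entBase r (a ⊓ b) := by
    refine ⟨hF.1.1, fun x hx hcon => ?_⟩
    have hxf : x ⊓ f ∈ F := hF.1.1.2.2.2 _ _ hx hfF
    have h1 : r (x ⊓ f) (a ⊓ b)ᶜ := tr _ _ _ (dom _ _ inf_le_left) hcon
    have h2 : r (x ⊓ f) (aᶜ ⊔ b) := dom _ _ (inf_le_right.trans (by
      rwa [← le_himp_iff, himp_eq, sup_comm] at hfab))
    have h3 : r (x ⊓ f) ((a ⊓ b)ᶜ ⊓ (aᶜ ⊔ b)) := conj _ _ _ h1 h2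
    have h4 : (a ⊓ b)ᶜ ⊓ (aᶜ ⊔ b) ≤ aᶜ := by
      rw [compl_inf, ← sup_inf_left]
      simp
    exact hF.1.2 hxf (tr _ _ _ h3 (dom _ _ h4))
  exact max_of_mem_base ⟨tr, dom, conj⟩ hF hmem inf_le_left

/-- Conversely, if `a ⊢~ b`, every maximal base element for `a ⊓ b` is maximal for `a`. -/
lemma max_of_max_inf (hr : PartialEntrenchment r) {a b : B} {F : Set B}
    (hF : F ∈ entMaxBase r (a ⊓ b)) (hab : MaxInfer r a b) :
    F ∈ entMaxBase r a := by
  obtain ⟨M, hM, hFM⟩ := exists_max hr (base_mono hr inf_le_left hF.1)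
  obtain ⟨f, hfM, hf⟩ := hab M hM
  have hM' : M ∈ entMaxBase r (a ⊓ b) := max_inf hr hM hfM hf
  have : F = M := hF.2 M hM'.1 hFM
  exact this ▸ hM

end Aux

theorem stmt10 (r : B → B → Prop) (hr : PartialEntrenchment r) :
    (∀ a b c : B, MaxInfer r a b → MaxInfer r a c → MaxInfer r (a ⊓ b) c) ∧
    (∀ a b c : B, MaxInfer r a c → MaxInfer r b c → MaxInfer r (a ⊔ b) c) ∧
    Preferential (MaxInfer r) := by
  -- Cautious Monotonicity
  have cm : ∀ a b c : B, MaxInfer r a b → MaxInfer r a c → MaxInfer r (a ⊓ b) c := by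
    intro a b c hab hac F hF
    obtain ⟨f, hfF, hf⟩ := hac F (max_of_max_inf hr hF hab)
    exact ⟨f, hfF, le_trans (inf_le_inf_left f inf_le_left) hf⟩
  -- Or
  have hor : ∀ a b c : B, MaxInfer r a c → MaxInfer r b c → MaxInfer r (a ⊔ b) c := by
    intro a b c hac hbc F hF
    obtain ⟨⟨⟨hne, hproper, hup, hmeet⟩, hcoh⟩, hmax⟩ := hF
    obtain ⟨tr, dom, conj⟩ := hr
    have hr' : PartialEntrenchment r := ⟨tr, dom, conj⟩
    have dich : F ⊆ Coh r a ∨ F ⊆ Coh r b := by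
      by_contra h
      push_neg at h
      rw [Set.not_subset] at h
      obtain ⟨h1', h2'⟩ := h
      rw [Set.not_subset] at h2'
      obtain ⟨x, hxF, hx⟩ := h1'
      obtain ⟨y, hyF, hy⟩ := h2'
      simp only [Coh, Set.mem_setOf_eq, not_not] at hx hy
      have hxy : x ⊓ y ∈ F := hmeet _ _ hxF hyF
      have h1 : r (x ⊓ y) aᶜ := tr _ _ _ (dom _ _ inf_le_left) hx
      have h2 : r (x ⊓ y) bᶜ := tr _ _ _ (dom _ _ inf_le_right) hy
      have h3 : r (x ⊓ y) (a ⊔ b)ᶜ := by rw [compl_sup]; exact conj _ _ _ h1 h2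
      exact hcoh hxy h3
    have hFfull : F ∈ entMaxBase r (a ⊔ b) :=
      ⟨⟨⟨hne, hproper, hup, hmeet⟩, hcoh⟩, hmax⟩
    rcases dich with hA | hB
    · have hFa : F ∈ entMaxBase r a :=
        max_of_mem_base hr' hFfull ⟨⟨hne, hproper, hup, hmeet⟩, hA⟩ le_sup_left
      obtain ⟨f, hfF, hf⟩ := hac F hFa
      by_cases hB : F ⊆ Coh r b
      · have hFb : F ∈ entMaxBase r b :=
          max_of_mem_base hr' hFfull ⟨⟨hne, hproper, hup, hmeet⟩, hB⟩ le_sup_right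
        obtain ⟨g, hgF, hg⟩ := hbc F hFb
        refine ⟨f ⊓ g, hmeet _ _ hfF hgF, ?_⟩
        rw [inf_sup_left]
        exact sup_le (le_trans (inf_le_inf_right a inf_le_left) hf)
          (le_trans (inf_le_inf_right b inf_le_right) hg)
      · have hex : ∃ x ∈ F, r x bᶜ := by
          by_contra h
          push_neg at h
          exact hB fun x hx => h x hx
        obtain ⟨x, hxF, hx⟩ := hex
        have hbF : bᶜ ∈ F := hup _ _ hxF hx
        refine ⟨f ⊓ bᶜ, hmeet _ _ hfF hbF, ?_⟩
        rw [inf_sup_left]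
        refine sup_le (le_trans (inf_le_inf_right a inf_le_left) hf) ?_
        calc f ⊓ bᶜ ⊓ b ≤ bᶜ ⊓ b := inf_le_inf_right b inf_le_right
        _ = ⊥ := by simp
        _ ≤ c := bot_le
    · have hFb : F ∈ entMaxBase r b :=
        max_of_mem_base hr' hFfull ⟨⟨hne, hproper, hup, hmeet⟩, hB⟩ le_sup_right
      obtain ⟨g, hgF, hg⟩ := hbc F hFb
      by_cases hA : F ⊆ Coh r a
      · have hFa : F ∈ entMaxBase r a :=
          max_of_mem_base hr' hFfull ⟨⟨hne, hproper, hup, hmeet⟩, hA⟩ le_sup_left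
        obtain ⟨f, hfF, hf⟩ := hac F hFa
        refine ⟨f ⊓ g, hmeet _ _ hfF hgF, ?_⟩
        rw [inf_sup_left]
        exact sup_le (le_trans (inf_le_inf_right a inf_le_left) hf)
          (le_trans (inf_le_inf_right b inf_le_right) hg)
      · have hex : ∃ x ∈ F, r x aᶜ := by
          by_contra h
          push_neg at h
          exact hA fun x hx => h x hx
        obtain ⟨x, hxF, hx⟩ := hex
        have haF : aᶜ ∈ F := hup _ _ hxF hx
        refine ⟨g ⊓ aᶜ, hmeet _ _ hgF haF, ?_⟩
        rw [inf_sup_left]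
        refine sup_le ?_ (le_trans (inf_le_inf_right b inf_le_left) hg)
        calc g ⊓ aᶜ ⊓ a ≤ aᶜ ⊓ a := inf_le_inf_right a inf_le_right
        _ = ⊥ := by simp
        _ ≤ c := bot_le
  refine ⟨cm, hor, ?_, ?_, ?_, ?_, cm, hor⟩
  · -- Supraclassicality
    intro a b h F hF
    obtain ⟨f, hf⟩ := hF.1.1.1
    exact ⟨f, hf, le_trans inf_le_right h⟩
  · -- Right Weakening
    intro a b c hab hbc F hF
    obtain ⟨f, hfF, hf⟩ := hab F hF
    exact ⟨f, hfF, hf.trans hbc⟩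
  · -- And
    intro a b c h1 h2 F hF
    obtain ⟨f, hfF, hf⟩ := h1 F hF
    obtain ⟨g, hgF, hg⟩ := h2 F hF
    exact ⟨f ⊓ g, hF.1.1.2.2.2 _ _ hfF hgF,
      le_inf (le_trans (inf_le_inf_right a inf_le_left) hf)
        (le_trans (inf_le_inf_right a inf_le_right) hg)⟩
  · -- Cut
    intro a b c h1 h2 F hF
    obtain ⟨f, hfF, hf⟩ := h1 F hF
    obtain ⟨g, hgF, hg⟩ := h2 F (max_inf hr hF hfF hf)
    refine ⟨f ⊓ g, hF.1.1.2.2.2 _ _ hfF hgF, le_trans ?_ hg⟩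
    exact le_inf (le_trans inf_le_left inf_le_right)
      (le_inf inf_le_right (le_trans (inf_le_inf_right a inf_le_left) hf))
end

section
/- Let ≼ be a connected partial entrenchment on B. Then for every a ∈ B the maximal base Fmax(a) has at most one element, and consequently for all a, b ∈ B: if Fmax(a) ∩ Fmax(a ⊓ b) ≠ ∅ then Fmax(a ⊓ b) ⊆ Fmax(a). -/
variable {B : Type*} [BooleanAlgebra B]

theorem stmt12 (r : B → B → Prop) (hr : PartialEntrenchment r)
    (hconn : ∀ a b : B, r a b ∨ r b a) :
    (∀ a : B, (entMaxBase r a).Subsingleton) ∧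
    (∀ a b : B, (entMaxBase r a ∩ entMaxBase r (a ⊓ b)).Nonempty →
      entMaxBase r (a ⊓ b) ⊆ entMaxBase r a) := by
  obtain ⟨htr, hdom, hconj⟩ := hr
  have hsub : ∀ a : B, (entMaxBase r a).Subsingleton := by
    intro a F hF F' hF'
    obtain ⟨⟨⟨hne, hprop, hup, hmeet⟩, hcoh⟩, hmax⟩ := hF
    obtain ⟨⟨⟨hne', hprop', hup', hmeet'⟩, hcoh'⟩, hmax'⟩ := hF'
    set G : Set B := {b | ∃ f ∈ F, ∃ f' ∈ F', r (f ⊓ f') b} with hGdef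
    have key : ∀ f ∈ F, ∀ f' ∈ F', ¬ r (f ⊓ f') aᶜ := by
      intro f hf f' hf' h
      rcases hconn f f' with h1 | h1
      · exact hcoh hf (htr _ _ _ (hconj f f' f (hdom f f le_rfl) h1) h)
      · exact hcoh' hf' (htr _ _ _ (hconj f f' f' h1 (hdom f' f' le_rfl)) h)
    have hFG : F ⊆ G := by
      intro f hf
      obtain ⟨f', hf'⟩ := hne'
      exact ⟨f, hf, f', hf', hdom _ _ inf_le_left⟩
    have hF'G : F' ⊆ G := by
      intro f' hf'
      obtain ⟨f, hf⟩ := hne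
      exact ⟨f, hf, f', hf', hdom _ _ inf_le_right⟩
    have hGcoh : G ⊆ Coh r a := by
      rintro b ⟨f, hf, f', hf', hb⟩ hba
      exact key f hf f' hf' (htr _ _ _ hb hba)
    have hGbase : G ∈ entBase r a := by
      refine ⟨⟨?_, ?_, ?_, ?_⟩, hGcoh⟩
      · obtain ⟨f, hf⟩ := hne; exact ⟨f, hFG hf⟩
      · intro h
        have : aᶜ ∈ Coh r a := hGcoh (h ▸ Set.mem_univ aᶜ)
        exact this (hdom _ _ le_rfl)
      · rintro b c ⟨f, hf, f', hf', hb⟩ hbc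
        exact ⟨f, hf, f', hf', htr _ _ _ hb hbc⟩
      · rintro b c ⟨f1, hf1, f1', hf1', hb⟩ ⟨f2, hf2, f2', hf2', hc⟩
        refine ⟨f1 ⊓ f2, hmeet _ _ hf1 hf2, f1' ⊓ f2', hmeet' _ _ hf1' hf2', ?_⟩
        have l1 : (f1 ⊓ f2) ⊓ (f1' ⊓ f2') ≤ f1 ⊓ f1' :=
          inf_le_inf inf_le_left inf_le_left
        have l2 : (f1 ⊓ f2) ⊓ (f1' ⊓ f2') ≤ f2 ⊓ f2' :=
          inf_le_inf inf_le_right inf_le_right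
        exact hconj _ _ _ (htr _ _ _ (hdom _ _ l1) hb) (htr _ _ _ (hdom _ _ l2) hc)
    have e1 := hmax G hGbase hFG
    have e2 := hmax' G hGbase hF'G
    rw [e1, e2]
  refine ⟨hsub, ?_⟩
  intro a b ⟨F, hFa, hFab⟩ G hG
  have : G = F := hsub (a ⊓ b) hG hFab
  rw [this]; exact hFa
end

section
/- Let ≼ be a connected partial entrenchment on B. Then the maxiconsistent inference relation ⊢~ of ≼ is a rational inference relation: it satisfies Supraclassicality, Right Weakening, And, Cut, Cautious Monotonicity, Or, and Rational Monotonicity (for all a, b, c: if not a ⊢~ bᶜ and a ⊢~ c, then a ⊓ b ⊢~ c). -/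
variable {B : Type*} [BooleanAlgebra B]

lemma maxInfer_iff (r : B → B → Prop) (hr : PartialEntrenchment r)
    (hconn : ∀ a b : B, r a b ∨ r b a) (a b : B) :
    MaxInfer r a b ↔ (r ⊤ aᶜ ∨ ¬ r (aᶜ ⊔ b) aᶜ) := by
  obtain ⟨hT, hD, hC⟩ := hr
  have hrefl : ∀ x : B, r x x := fun x => hD x x le_rfl
  have hle : ∀ x y z : B, x ≤ y → r y z → r x z :=
    fun x y z h h2 => hT _ _ _ (hD _ _ h) h2
  have hmeet : ∀ x y z : B, ¬ r x z → ¬ r y z → ¬ r (x ⊓ y) z := by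
    intro x y z hx hy hxy
    rcases hconn x y with h | h
    · exact hx (hT _ _ _ (hC x y x (hrefl x) h) hxy)
    · exact hy (hT _ _ _ (hC x y y h (hrefl y)) hxy)
  have cohBase : ¬ r ⊤ aᶜ → Coh r a ∈ entBase r a := by
    intro htop
    refine ⟨⟨⟨⊤, htop⟩, ?_, ?_, ?_⟩, subset_rfl⟩
    · intro heq
      have : aᶜ ∈ Coh r a := heq ▸ Set.mem_univ aᶜ
      exact this (hrefl aᶜ)
    · intro x y hx hxy h
      exact hx (hT _ _ _ hxy h)
    · intro x y hx hy
      exact hmeet x y aᶜ hx hy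
  constructor
  · intro hM
    by_cases htop : r ⊤ aᶜ
    · exact Or.inl htop
    · right
      have hmem : Coh r a ∈ entMaxBase r a :=
        ⟨cohBase htop, fun F' hF' hsub => hsub.antisymm hF'.2⟩
      obtain ⟨f, hf, hfa⟩ := hM _ hmem
      intro habs
      have hfle : f ≤ aᶜ ⊔ b := by
        rw [sup_comm, ← himp_eq]
        exact le_himp_iff.mpr hfa
      exact hf (hT _ _ _ (hD _ _ hfle) habs)
  · intro h F hF
    rcases h with htop | hb
    · exfalso
      obtain ⟨⟨⟨⟨x, hx⟩, _, _, _⟩, hsub⟩, _⟩ := hF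
      exact (hsub hx) (hle _ _ _ le_top htop)
    · have htop : ¬ r ⊤ aᶜ := fun h2 => hb (hle _ _ _ le_top h2)
      have hFC : F = Coh r a := hF.2 _ (cohBase htop) hF.1.2
      refine ⟨aᶜ ⊔ b, hFC ▸ hb, ?_⟩
      simp [inf_sup_right]

theorem stmt13 (r : B → B → Prop) (hr : PartialEntrenchment r)
    (hconn : ∀ a b : B, r a b ∨ r b a) :
    Preferential (MaxInfer r) ∧
    (∀ a b c : B, ¬ MaxInfer r a bᶜ → MaxInfer r a c → MaxInfer r (a ⊓ b) c) := by
  have key := maxInfer_iff r hr hconn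
  obtain ⟨hT, hD, hC⟩ := hr
  have hrefl : ∀ x : B, r x x := fun x => hD x x le_rfl
  have hle : ∀ x y z : B, x ≤ y → r y z → r x z :=
    fun x y z h h2 => hT _ _ _ (hD _ _ h) h2
  have hler : ∀ x y z : B, r x y → y ≤ z → r x z :=
    fun x y z h h2 => hT _ _ _ h (hD _ _ h2)
  have hmeet : ∀ x y z : B, ¬ r x z → ¬ r y z → ¬ r (x ⊓ y) z := by
    intro x y z hx hy hxy
    rcases hconn x y with h | h
    · exact hx (hT _ _ _ (hC x y x (hrefl x) h) hxy)
    · exact hy (hT _ _ _ (hC x y y h (hrefl y)) hxy)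
  have L2 : ∀ u v : B, (u ⊔ v) ⊓ (u ⊔ vᶜ) ≤ u := by
    intro u v; rw [← sup_inf_left]; simp
  have or_aux : ∀ a b c : B, ¬ r (aᶜ ⊔ c) aᶜ → (r ⊤ bᶜ ∨ ¬ r (bᶜ ⊔ c) bᶜ) →
      ¬ r ((a ⊔ b)ᶜ ⊔ c) (a ⊔ b)ᶜ := by
    intro a b c ha hb hy
    have hyab : r ((a ⊔ b)ᶜ ⊔ c) aᶜ :=
      hler _ _ _ hy (by rw [compl_sup]; exact inf_le_left)
    have hybb : r ((a ⊔ b)ᶜ ⊔ c) bᶜ :=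
      hler _ _ _ hy (by rw [compl_sup]; exact inf_le_right)
    have hyeq : (aᶜ ⊔ c) ⊓ (bᶜ ⊔ c) = (a ⊔ b)ᶜ ⊔ c := by
      rw [compl_sup, sup_inf_right]
    have caseA : r (aᶜ ⊔ c) (bᶜ ⊔ c) → False := by
      intro h
      have h5 : r (aᶜ ⊔ c) ((aᶜ ⊔ c) ⊓ (bᶜ ⊔ c)) := hC _ _ _ (hrefl _) h
      rw [hyeq] at h5
      exact ha (hT _ _ _ h5 hyab)
    rcases hb with hb | hb
    · exact caseA (hler _ _ _ (hle _ _ _ le_top hb) le_sup_left)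
    · rcases hconn (aᶜ ⊔ c) (bᶜ ⊔ c) with h | h
      · exact caseA h
      · have h5 : r (bᶜ ⊔ c) ((aᶜ ⊔ c) ⊓ (bᶜ ⊔ c)) := hC _ _ _ h (hrefl _)
        rw [hyeq] at h5
        exact hb (hT _ _ _ h5 hybb)
  refine ⟨⟨?_, ?_, ?_, ?_, ?_, ?_⟩, ?_⟩
  -- Supraclassicality
  · intro a b hab
    rw [key]
    by_cases htop : r ⊤ aᶜ
    · exact Or.inl htop
    · right
      intro h
      exact htop (hle _ _ _ (compl_sup_eq_top.symm.le.trans (sup_le_sup_left hab _)) h)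
  -- Right Weakening
  · intro a b c h hbc
    rw [key] at h ⊢
    rcases h with h | h
    · exact Or.inl h
    · right
      intro h2
      exact h (hle _ _ _ (sup_le_sup_left hbc _) h2)
  -- And
  · intro a b c h1 h2
    rw [key] at h1 h2 ⊢
    rcases h1 with h1 | h1
    · exact Or.inl h1
    rcases h2 with h2 | h2
    · exact Or.inl h2
    right
    intro h3
    rw [sup_inf_left] at h3
    exact hmeet _ _ _ h1 h2 h3
  -- Cut
  · intro a b c h1 h2
    rw [key] at h1 h2 ⊢
    rcases h1 with h1 | h1
    · exact Or.inl h1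
    rcases h2 with h2 | h2
    · exfalso
      rw [compl_inf] at h2
      have h4 : r (aᶜ ⊔ b) ((aᶜ ⊔ b) ⊓ (aᶜ ⊔ bᶜ)) :=
        hC _ _ _ (hrefl _) (hle _ _ _ le_top h2)
      exact h1 (hler _ _ _ h4 (L2 aᶜ b))
    · right
      intro h3
      have h2' : ¬ r ((a ⊓ b)ᶜ ⊔ c) aᶜ := fun hh =>
        h2 (hler _ _ _ hh (by rw [compl_inf]; exact le_sup_left))
      apply hmeet _ _ _ h1 h2'
      apply hT _ _ _ (hD _ _ ?_) h3
      rw [compl_inf, sup_assoc, ← sup_inf_left]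
      exact sup_le_sup_left (by simp [inf_sup_left]) _
  -- Cautious Monotonicity
  · intro a b c h1 h2
    rw [key] at h1 h2 ⊢
    rcases h1 with h1 | h1
    · exact Or.inl (hler _ _ _ h1 (compl_le_compl inf_le_left))
    rcases h2 with h2 | h2
    · exact Or.inl (hler _ _ _ h2 (compl_le_compl inf_le_left))
    right
    intro h3
    apply hmeet _ _ _ h1 h2
    have m1 : r ((aᶜ ⊔ b) ⊓ (aᶜ ⊔ c)) ((a ⊓ b)ᶜ ⊔ c) :=
      hD _ _ (inf_le_right.trans
        (sup_le_sup_right (compl_le_compl inf_le_left) c))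
    have m3 : r ((aᶜ ⊔ b) ⊓ (aᶜ ⊔ c)) (aᶜ ⊔ bᶜ) := by
      have := hT _ _ _ m1 h3
      rwa [compl_inf] at this
    have m5 : r ((aᶜ ⊔ b) ⊓ (aᶜ ⊔ c)) ((aᶜ ⊔ b) ⊓ (aᶜ ⊔ bᶜ)) :=
      hC _ _ _ (hD _ _ inf_le_left) m3
    exact hler _ _ _ m5 (L2 aᶜ b)
  -- Or
  · intro a b c h1 h2
    rw [key] at h1 h2 ⊢
    rcases h1 with h1 | h1
    · rcases h2 with h2 | h2
      · left
        rw [compl_sup]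
        exact hC _ _ _ h1 h2
      · right
        rw [sup_comm a b]
        exact or_aux b a c h2 (Or.inl h1)
    · exact Or.inr (or_aux a b c h1 h2)
  -- Rational Monotonicity
  · intro a b c hnb hc
    rw [key] at hnb hc ⊢
    push_neg at hnb
    obtain ⟨hnt, hbb⟩ := hnb
    rcases hc with hc | hc
    · exact absurd hc hnt
    right
    intro h3
    apply hc
    have hbb' : r (a ⊓ b)ᶜ aᶜ := by rw [compl_inf]; exact hbb
    have h4 : r ((a ⊓ b)ᶜ ⊔ c) aᶜ := hT _ _ _ h3 hbb'
    exact hle _ _ _ (sup_le_sup_right (compl_le_compl inf_le_left) c) h4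
end

section
/- Let ≼ be a weakly disjunctive partial entrenchment on B. Then for every a, b ∈ B and every F ∈ Fmax(a), either aᶜ ⊔ b ∈ F or aᶜ ⊔ bᶜ ∈ F. -/
variable {B : Type*} [BooleanAlgebra B]

/-- Weak Disjunction. -/
def WeakDisjunctive (r : B → B → Prop) : Prop :=
  ∀ a b c : B, r (aᶜ ⊔ b) aᶜ → r (aᶜ ⊔ c) aᶜ → r (aᶜ ⊔ b ⊔ c) aᶜ

/-- Extension lemma: if `z ∉ F` for `F` maximal in the base, then adjoining `z`
must break coherence, i.e. some `f ∈ F` has `f ⊓ z ≼ aᶜ`. -/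
lemma ext_lemma (r : B → B → Prop) (hr : PartialEntrenchment r) (a z : B)
    (F : Set B) (hF : F ∈ entMaxBase r a) (hz : z ∉ F) :
    ∃ f ∈ F, r (f ⊓ z) aᶜ := by
  by_contra hcon
  push_neg at hcon
  obtain ⟨⟨⟨hne, hproper, hup, hmeet⟩, hcoh⟩, hmax⟩ := hF
  obtain ⟨htrans, hdom, hconj⟩ := hr
  set G : Set B := {x | ∃ f ∈ F, r (f ⊓ z) x} with hGdef
  have hGcoh : G ⊆ Coh r a := by
    rintro x ⟨f, hf, hfx⟩ hx
    exact hcon f hf (htrans _ _ _ hfx hx)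
  obtain ⟨f0, hf0⟩ := hne
  have hzG : z ∈ G := ⟨f0, hf0, hdom _ _ inf_le_right⟩
  have hGfilter : IsEntFilter r G := by
    refine ⟨⟨z, hzG⟩, ?_, ?_, ?_⟩
    · intro heq
      have hac : aᶜ ∈ G := heq ▸ Set.mem_univ aᶜ
      exact hGcoh hac (hdom _ _ le_rfl)
    · rintro x y ⟨f, hf, hfx⟩ hxy
      exact ⟨f, hf, htrans _ _ _ hfx hxy⟩
    · rintro x y ⟨f, hf, hfx⟩ ⟨g, hg, hgy⟩
      refine ⟨f ⊓ g, hmeet _ _ hf hg, ?_⟩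
      have h1 : r ((f ⊓ g) ⊓ z) x :=
        htrans _ _ _ (hdom _ _ (inf_le_inf_right z inf_le_left)) hfx
      have h2 : r ((f ⊓ g) ⊓ z) y :=
        htrans _ _ _ (hdom _ _ (inf_le_inf_right z inf_le_right)) hgy
      exact hconj _ _ _ h1 h2
  have hFG : F ⊆ G := fun f hf => ⟨f, hf, hdom _ _ inf_le_left⟩
  have hFeq : F = G := hmax G ⟨hGfilter, hGcoh⟩ hFG
  rw [hFeq] at hz
  exact hz hzG

theorem stmt14 (r : B → B → Prop) (hr : PartialEntrenchment r)
    (hwd : WeakDisjunctive r) (a b : B) (F : Set B) (hF : F ∈ entMaxBase r a) :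
    aᶜ ⊔ b ∈ F ∨ aᶜ ⊔ bᶜ ∈ F := by
  by_contra hcon
  push_neg at hcon
  obtain ⟨hb, hb'⟩ := hcon
  obtain ⟨f, hfF, hf⟩ := ext_lemma r hr a (aᶜ ⊔ b) F hF hb
  obtain ⟨g, hgF, hg⟩ := ext_lemma r hr a (aᶜ ⊔ bᶜ) F hF hb'
  obtain ⟨⟨⟨hne, hproper, hup, hmeet⟩, hcoh⟩, hmax⟩ := hF
  obtain ⟨htrans, hdom, hconj⟩ := hr
  set h : B := f ⊓ g with hh
  have hhF : h ∈ F := hmeet _ _ hfF hgF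
  have h1 : r (h ⊓ (aᶜ ⊔ b)) (h ⊓ aᶜ) := by
    have := htrans _ _ _ (hdom (h ⊓ (aᶜ ⊔ b)) (f ⊓ (aᶜ ⊔ b))
      (inf_le_inf_right _ inf_le_left)) hf
    exact hconj _ _ _ (hdom _ _ inf_le_left) this
  have h2 : r (h ⊓ (aᶜ ⊔ bᶜ)) (h ⊓ aᶜ) := by
    have := htrans _ _ _ (hdom (h ⊓ (aᶜ ⊔ bᶜ)) (g ⊓ (aᶜ ⊔ bᶜ))
      (inf_le_inf_right _ inf_le_right)) hg
    exact hconj _ _ _ (hdom _ _ inf_le_left) this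
  have e0 : (hᶜ ⊔ a)ᶜ = h ⊓ aᶜ := by rw [compl_sup, compl_compl]
  have e1 : (hᶜ ⊔ a)ᶜ ⊔ (h ⊓ b) = h ⊓ (aᶜ ⊔ b) := by
    rw [e0, ← inf_sup_left]
  have e2 : (hᶜ ⊔ a)ᶜ ⊔ (h ⊓ bᶜ) = h ⊓ (aᶜ ⊔ bᶜ) := by
    rw [e0, ← inf_sup_left]
  have key := hwd (hᶜ ⊔ a) (h ⊓ b) (h ⊓ bᶜ) (by rw [e1, e0]; exact h1)
    (by rw [e2, e0]; exact h2)
  rw [e0] at key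
  have e3 : h ⊓ aᶜ ⊔ h ⊓ b ⊔ h ⊓ bᶜ = h := by
    rw [← inf_sup_left, ← inf_sup_left, sup_assoc, sup_compl_eq_top, sup_top_eq,
      inf_top_eq]
  rw [e3] at key
  have : r h aᶜ := htrans _ _ _ key (hdom _ _ inf_le_right)
  exact hcoh hhF this
end

section
/- Let ≼ be a weakly disjunctive partial entrenchment on B. Then for all a, b ∈ B: (aᶜ ⊔ bᶜ) ≼ aᶜ if and only if a ⊢~ b. -/
variable {B : Type*} [BooleanAlgebra B]

/-- Key consequence of weak disjunction: if both `h ⊓ (aᶜ ⊔ b)` and `h ⊓ (aᶜ ⊔ bᶜ)`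
are at most as entrenched as `aᶜ`, then so is `h`. -/
lemma key_wd (r : B → B → Prop) (hr : PartialEntrenchment r) (hwd : WeakDisjunctive r)
    (a b h : B) (h1 : r (h ⊓ (aᶜ ⊔ b)) aᶜ) (h2 : r (h ⊓ (aᶜ ⊔ bᶜ)) aᶜ) : r h aᶜ := by
  obtain ⟨htrans, hdom, hconj⟩ := hr
  have u1 : r (h ⊓ (aᶜ ⊔ b)) (h ⊓ aᶜ) := hconj _ _ _ (hdom _ _ inf_le_left) h1
  have u2 : r (h ⊓ (aᶜ ⊔ bᶜ)) (h ⊓ aᶜ) := hconj _ _ _ (hdom _ _ inf_le_left) h2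
  have e1 : (hᶜ ⊔ a)ᶜ = h ⊓ aᶜ := by rw [compl_sup, compl_compl]
  have e2 : (h ⊓ aᶜ) ⊔ (h ⊓ (a ⊓ b)) = h ⊓ (aᶜ ⊔ b) := by
    rw [← inf_sup_left, sup_inf_left, compl_sup_eq_top, top_inf_eq]
  have e3 : (h ⊓ aᶜ) ⊔ (h ⊓ (a ⊓ bᶜ)) = h ⊓ (aᶜ ⊔ bᶜ) := by
    rw [← inf_sup_left, sup_inf_left, compl_sup_eq_top, top_inf_eq]
  have e4 : (h ⊓ aᶜ) ⊔ (h ⊓ (a ⊓ b)) ⊔ (h ⊓ (a ⊓ bᶜ)) = h := by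
    rw [← inf_sup_left, ← inf_sup_left, sup_assoc, ← inf_sup_left, sup_compl_eq_top,
      inf_top_eq, compl_sup_eq_top, inf_top_eq]
  have hw := hwd (hᶜ ⊔ a) (h ⊓ (a ⊓ b)) (h ⊓ (a ⊓ bᶜ))
  rw [e1, e4, e2, e3] at hw
  exact htrans _ _ _ (hw u1 u2) (hdom _ _ inf_le_right)

/-- If adjoining `e` to a maximal base element `F` keeps coherence, then `e ∈ F`. -/
lemma mem_of_maximal (r : B → B → Prop) (hr : PartialEntrenchment r) {a : B} {F : Set B}
    (hF : F ∈ entMaxBase r a) (e : B) (he : ∀ f ∈ F, ¬ r (f ⊓ e) aᶜ) : e ∈ F := by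
  obtain ⟨⟨⟨hne, _hproper, hup, hmeet⟩, _hcoh⟩, hmax⟩ := hF
  obtain ⟨htrans, hdom, hconj⟩ := hr
  set F' : Set B := {x | ∃ f ∈ F, r (f ⊓ e) x} with hF'def
  have hsub : F ⊆ F' := fun f hf => ⟨f, hf, hdom _ _ inf_le_left⟩
  have hF'coh : F' ⊆ Coh r a := by
    rintro x ⟨f, hf, hfx⟩ hx
    exact he f hf (htrans _ _ _ hfx hx)
  have hF'base : F' ∈ entBase r a := by
    refine ⟨⟨hne.mono hsub, ?_, ?_, ?_⟩, hF'coh⟩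
    · intro hu
      have hac : aᶜ ∈ F' := by rw [hu]; trivial
      exact hF'coh hac (hdom _ _ le_rfl)
    · rintro x y ⟨f, hf, hfx⟩ hxy
      exact ⟨f, hf, htrans _ _ _ hfx hxy⟩
    · rintro x y ⟨f, hf, hfx⟩ ⟨g, hg, hgy⟩
      refine ⟨f ⊓ g, hmeet _ _ hf hg, hconj _ _ _ ?_ ?_⟩
      · exact htrans _ _ _ (hdom _ _ (inf_le_inf_right e inf_le_left)) hfx
      · exact htrans _ _ _ (hdom _ _ (inf_le_inf_right e inf_le_right)) hgy
  have hEq : F = F' := hmax F' hF'base hsub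
  rw [hEq]
  obtain ⟨f, hf⟩ := hne
  exact ⟨f, hf, hdom _ _ inf_le_right⟩

theorem stmt15 (r : B → B → Prop) (hr : PartialEntrenchment r)
    (hwd : WeakDisjunctive r) (a b : B) :
    r (aᶜ ⊔ bᶜ) aᶜ ↔ MaxInfer r a b := by
  obtain ⟨htrans, hdom, hconj⟩ := hr
  constructor
  · intro H1 F hF
    have hcoh := hF.1.2
    have hup := hF.1.1.2.2.1
    have hmeet := hF.1.1.2.2.2
    have prov : ∀ f ∈ F, ¬ r (f ⊓ (aᶜ ⊔ b)) aᶜ := by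
      intro f hf hcontra
      have prov2 : ∀ g ∈ F, ¬ r (g ⊓ (aᶜ ⊔ bᶜ)) aᶜ := by
        intro g hg hg2
        have h1 : r ((f ⊓ g) ⊓ (aᶜ ⊔ b)) aᶜ :=
          htrans _ _ _ (hdom _ _ (inf_le_inf_right _ inf_le_left)) hcontra
        have h2 : r ((f ⊓ g) ⊓ (aᶜ ⊔ bᶜ)) aᶜ :=
          htrans _ _ _ (hdom _ _ (inf_le_inf_right _ inf_le_right)) hg2
        exact hcoh (hmeet _ _ hf hg)
          (key_wd r ⟨htrans, hdom, hconj⟩ hwd a b (f ⊓ g) h1 h2)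
      have hbc : aᶜ ⊔ bᶜ ∈ F :=
        mem_of_maximal r ⟨htrans, hdom, hconj⟩ hF (aᶜ ⊔ bᶜ) prov2
      have hac : aᶜ ∈ F := hup _ _ hbc H1
      exact hcoh hac (hdom _ _ le_rfl)
    have hb : aᶜ ⊔ b ∈ F :=
      mem_of_maximal r ⟨htrans, hdom, hconj⟩ hF (aᶜ ⊔ b) prov
    refine ⟨aᶜ ⊔ b, hb, ?_⟩
    rw [inf_sup_right, compl_inf_eq_bot, bot_sup_eq]
    exact inf_le_left
  · intro hmi
    by_contra h0
    set G0 : Set B := {x | r (aᶜ ⊔ bᶜ) x} with hG0def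
    have hG0 : G0 ∈ entBase r a := by
      refine ⟨⟨⟨aᶜ ⊔ bᶜ, hdom _ _ le_rfl⟩, ?_, ?_, ?_⟩, ?_⟩
      · intro hu
        have : aᶜ ∈ G0 := by rw [hu]; trivial
        exact h0 this
      · intro x y hx hxy; exact htrans _ _ _ hx hxy
      · intro x y hx hy; exact hconj _ _ _ hx hy
      · intro x hx hxa; exact h0 (htrans _ _ _ hx hxa)
    have hchain : ∀ c ⊆ entBase r a, IsChain (· ⊆ ·) c → c.Nonempty →
        ∃ ub ∈ entBase r a, ∀ s ∈ c, s ⊆ ub := by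
      intro c hc hchain ⟨s0, hs0⟩
      refine ⟨⋃₀ c, ⟨⟨?_, ?_, ?_, ?_⟩, ?_⟩, fun s hs => Set.subset_sUnion_of_mem hs⟩
      · obtain ⟨x, hx⟩ := (hc hs0).1.1
        exact ⟨x, s0, hs0, hx⟩
      · intro hu
        have : aᶜ ∈ ⋃₀ c := by rw [hu]; trivial
        obtain ⟨s, hs, hxs⟩ := this
        exact (hc hs).2 hxs (hdom _ _ le_rfl)
      · rintro x y ⟨s, hs, hxs⟩ hxy
        exact ⟨s, hs, (hc hs).1.2.2.1 _ _ hxs hxy⟩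
      · rintro x y ⟨s, hs, hxs⟩ ⟨t, ht, hyt⟩
        rcases hchain.total hs ht with hst | hts
        · exact ⟨t, ht, (hc ht).1.2.2.2 _ _ (hst hxs) hyt⟩
        · exact ⟨s, hs, (hc hs).1.2.2.2 _ _ hxs (hts hyt)⟩
      · rintro x ⟨s, hs, hxs⟩
        exact (hc hs).2 hxs
    obtain ⟨F, hsub, hFmax⟩ := zorn_subset_nonempty (entBase r a) hchain G0 hG0
    have hFm : F ∈ entMaxBase r a :=
      ⟨hFmax.1, fun F' hF' hFF' => Set.Subset.antisymm hFF' (hFmax.2 hF' hFF')⟩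
    obtain ⟨f, hf, hfb⟩ := hmi F hFm
    have hf2 : f ≤ b ⊔ aᶜ := by
      have := le_himp_iff.mpr hfb
      rwa [himp_eq] at this
    have hbc : aᶜ ⊔ bᶜ ∈ F := hsub (hdom _ _ le_rfl)
    have hmem : f ⊓ (aᶜ ⊔ bᶜ) ∈ F := hFmax.1.1.2.2.2 _ _ hf hbc
    have hle : f ⊓ (aᶜ ⊔ bᶜ) ≤ aᶜ := by
      calc f ⊓ (aᶜ ⊔ bᶜ) ≤ (b ⊔ aᶜ) ⊓ (aᶜ ⊔ bᶜ) := inf_le_inf_right _ hf2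
        _ = aᶜ := by rw [sup_comm b aᶜ, ← sup_inf_left, inf_compl_eq_bot, sup_bot_eq]
    exact hFmax.1.2 hmem (hdom _ _ hle)
end

section
/- Let ≼ be a partial entrenchment on B. Then P(N(≼)) = ≼; explicitly, for all a, b ∈ B, ((a ⊓ b) ⊔ a) ≼ (a ⊓ b) if and only if a ≼ b. -/
variable {B : Type*} [BooleanAlgebra B]

/-- N(≼): a N b iff (aᶜ ⊔ bᶜ) ≼ aᶜ. -/
def Nrel (r : B → B → Prop) (a b : B) : Prop := r (aᶜ ⊔ bᶜ) aᶜ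

/-- P(|∼): a P b iff (aᶜ ⊔ bᶜ) |∼ aᶜ. -/
def Prel (s : B → B → Prop) (a b : B) : Prop := s (aᶜ ⊔ bᶜ) aᶜ

theorem stmt16 (r : B → B → Prop) (hr : PartialEntrenchment r) :
    (∀ a b : B, Prel (Nrel r) a b ↔ r a b) ∧
    (∀ a b : B, r ((a ⊓ b) ⊔ a) (a ⊓ b) ↔ r a b) := by
  obtain ⟨htr, hdom, hconj⟩ := hr
  have key : ∀ a b : B, r ((a ⊓ b) ⊔ a) (a ⊓ b) ↔ r a b := by
    intro a b
    have he : (a ⊓ b) ⊔ a = a := by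
      rw [sup_comm, sup_inf_self]
    rw [he]
    constructor
    · intro h
      exact htr _ _ _ h (hdom _ _ inf_le_right)
    · intro h
      exact hconj _ _ _ (hdom _ _ le_rfl) h
  refine ⟨fun a b => ?_, key⟩
  have : Prel (Nrel r) a b = r ((a ⊓ b) ⊔ a) (a ⊓ b) := by
    simp [Prel, Nrel, compl_sup]
  rw [this]
  exact key a b
end

section
/- Let |∼ be a preferential inference relation on B. Then N(P(|∼)) = |∼; explicitly, for all a, b ∈ B, (a ⊓ b) ⊔ a |∼ a ⊓ b if and only if a |∼ b. -/
variable {B : Type*} [BooleanAlgebra B]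

theorem stmt17 (s : B → B → Prop) (hs : Preferential s) :
    (∀ a b : B, Nrel (Prel s) a b ↔ s a b) ∧
    (∀ a b : B, s ((a ⊓ b) ⊔ a) (a ⊓ b) ↔ s a b) := by
  obtain ⟨supra, rw_, and_, _, _, _⟩ := hs
  have key : ∀ a b : B, s ((a ⊓ b) ⊔ a) (a ⊓ b) ↔ s a b := by
    intro a b
    rw [sup_comm, sup_inf_self]
    constructor
    · intro h; exact rw_ _ _ _ h inf_le_right
    · intro h; exact and_ _ _ _ (supra _ _ le_rfl) h
  refine ⟨fun a b => ?_, key⟩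
  have : Nrel (Prel s) a b ↔ s ((a ⊓ b) ⊔ a) (a ⊓ b) := by
    simp [Nrel, Prel, compl_sup]
  rw [this, key]
end

section
/- Let |∼ be a preferential inference relation on B and define ≼ = P(|∼), i.e., a ≼ b iff (aᶜ ⊔ bᶜ) |∼ aᶜ. Then ≼ is a weakly disjunctive partial entrenchment on B (it satisfies Transitivity, Dominance, Conjunction, and Weak Disjunction), and for all a, b ∈ B: a |∼ b if and only if a ⊢~ b, where ⊢~ is the maxiconsistent inference relation of ≼. -/
variable {B : Type*} [BooleanAlgebra B]

section Aux

variable {B : Type*} [BooleanAlgebra B]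

private lemma ltrans {s : B → B → Prop} (hs : Preferential s) {u v w : B}
    (h1 : s (u ⊔ v) u) (h2 : s (v ⊔ w) v) : s (u ⊔ w) u := by
  obtain ⟨supra, rwk, _, hcut, hcm, hor⟩ := hs
  have h3 : s (v ⊔ w) (u ⊔ v) := rwk _ _ _ h2 le_sup_right
  have h5 : s ((u ⊔ v) ⊔ (v ⊔ w)) (u ⊔ v) := hor _ _ _ (supra _ _ le_rfl) h3
  have e1 : (u ⊔ v) ⊔ (v ⊔ w) = (u ⊔ v) ⊔ w := by
    rw [sup_assoc, ← sup_assoc v v w, sup_idem, ← sup_assoc]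
  rw [e1] at h5
  have h7 : s (((u ⊔ v) ⊔ w) ⊓ (u ⊔ v)) u := by
    rw [inf_eq_right.mpr le_sup_left]; exact h1
  have h8 : s ((u ⊔ v) ⊔ w) u := hcut _ _ _ h5 h7
  have h9 : s ((u ⊔ v) ⊔ w) (u ⊔ w) := rwk _ _ _ h8 le_sup_left
  have h10 : s (((u ⊔ v) ⊔ w) ⊓ (u ⊔ w)) u := hcm _ _ _ h9 h8
  have e2 : ((u ⊔ v) ⊔ w) ⊓ (u ⊔ w) = u ⊔ w :=
    inf_eq_right.mpr (sup_le (le_sup_left.trans le_sup_left) le_sup_right)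
  rwa [e2] at h10

private lemma rdom {s : B → B → Prop} (hs : Preferential s) {a b : B} (h : a ≤ b) :
    Prel s a b :=
  hs.1 _ _ (sup_le le_rfl (compl_le_compl h))

private lemma rtrans {s : B → B → Prop} (hs : Preferential s) {a b c : B}
    (h1 : Prel s a b) (h2 : Prel s b c) : Prel s a c :=
  ltrans hs h1 h2

private lemma rconj {s : B → B → Prop} (hs : Preferential s) {a b c : B}
    (h1 : Prel s c a) (h2 : Prel s c b) : Prel s c (a ⊓ b) := by
  have h3 : s ((cᶜ ⊔ aᶜ) ⊔ (cᶜ ⊔ bᶜ)) cᶜ := hs.2.2.2.2.2 _ _ _ h1 h2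
  show s (cᶜ ⊔ (a ⊓ b)ᶜ) cᶜ
  rw [compl_inf, sup_sup_distrib_left]
  exact h3

private lemma bot_not_coh {s : B → B → Prop} (hs : Preferential s) (a : B) :
    ⊥ ∉ Coh (Prel s) a := by
  intro h
  exact h (hs.1 _ _ (by simp))

private lemma compl_not_coh {s : B → B → Prop} (hs : Preferential s) (a : B) :
    aᶜ ∉ Coh (Prel s) a := fun h => h (rdom hs le_rfl)

/-- Lemma A: if `s a b` and `f ⊓ (aᶜ ⊔ b) ≼ aᶜ` then `f ≼ aᶜ`. -/
private lemma lemA {s : B → B → Prop} (hs : Preferential s) {a b f : B}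
    (hab : s a b) (h : Prel s (f ⊓ (aᶜ ⊔ b)) aᶜ) : Prel s f aᶜ := by
  obtain ⟨supra, rwk, hand, _, _, hor⟩ := hs
  have e0 : (f ⊓ (aᶜ ⊔ b))ᶜ = fᶜ ⊔ (a ⊓ bᶜ) := by
    rw [compl_inf, compl_sup, compl_compl]
  have h' : s ((fᶜ ⊔ (a ⊓ bᶜ)) ⊔ aᶜᶜ) (fᶜ ⊔ (a ⊓ bᶜ)) := by
    rw [← e0]; exact h
  rw [compl_compl] at h'
  have e1 : (fᶜ ⊔ (a ⊓ bᶜ)) ⊔ a = fᶜ ⊔ a := by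
    rw [sup_assoc, show (a ⊓ bᶜ) ⊔ a = a from sup_eq_right.mpr inf_le_left]
  rw [e1] at h'
  have h1 : s a (fᶜ ⊔ b) := rwk _ _ _ hab le_sup_right
  have h2 : s fᶜ (fᶜ ⊔ b) := supra _ _ le_sup_left
  have h3 : s (fᶜ ⊔ a) (fᶜ ⊔ b) := by
    have := hor _ _ _ h1 h2
    rwa [sup_comm] at this
  have h4 : s (fᶜ ⊔ a) ((fᶜ ⊔ b) ⊓ (fᶜ ⊔ (a ⊓ bᶜ))) := hand _ _ _ h3 h'
  have e2 : (fᶜ ⊔ b) ⊓ (fᶜ ⊔ (a ⊓ bᶜ)) = fᶜ := by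
    rw [← sup_inf_left]
    have : b ⊓ (a ⊓ bᶜ) = ⊥ := by
      rw [inf_left_comm]; simp
    rw [this, sup_bot_eq]
  show s (fᶜ ⊔ aᶜᶜ) fᶜ
  rw [compl_compl]
  exact rwk _ _ _ h4 (le_of_eq e2)

/-- If `(aᶜ ⊔ bᶜ) ≼ aᶜ` then `s a b`. -/
private lemma key1 {s : B → B → Prop} (hs : Preferential s) {a b : B}
    (h : Prel s (aᶜ ⊔ bᶜ) aᶜ) : s a b := by
  have h' : s (((aᶜ ⊔ bᶜ)ᶜ) ⊔ aᶜᶜ) (aᶜ ⊔ bᶜ)ᶜ := h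
  simp only [compl_sup, compl_compl] at h'
  rw [show (a ⊓ b) ⊔ a = a from sup_eq_right.mpr inf_le_left] at h'
  exact hs.2.1 _ _ _ h' inf_le_right

end Aux

theorem stmt18 (s : B → B → Prop) (hs : Preferential s) :
    PartialEntrenchment (Prel s : B → B → Prop) ∧
    WeakDisjunctive (Prel s : B → B → Prop) ∧
    (∀ a b : B, s a b ↔ MaxInfer (Prel s) a b) := by
  refine ⟨⟨fun a b c h1 h2 => rtrans hs h1 h2, fun a b h => rdom hs h,
    fun a b c h1 h2 => rconj hs h1 h2⟩, ?_, ?_⟩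
  · -- Weak Disjunction
    intro a b c h1 h2
    obtain ⟨supra, rwk, hand, _, _, _⟩ := hs
    have h1' : s a (a ⊓ bᶜ) := by
      have h := h1; unfold Prel at h
      simp only [compl_sup, compl_compl] at h
      rwa [show (a ⊓ bᶜ) ⊔ a = a from sup_eq_right.mpr inf_le_left] at h
    have h2' : s a (a ⊓ cᶜ) := by
      have h := h2; unfold Prel at h
      simp only [compl_sup, compl_compl] at h
      rwa [show (a ⊓ cᶜ) ⊔ a = a from sup_eq_right.mpr inf_le_left] at h
    unfold Prel
    simp only [compl_sup, compl_compl]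
    rw [show (a ⊓ bᶜ ⊓ cᶜ) ⊔ a = a from
      sup_eq_right.mpr (inf_le_left.trans inf_le_left)]
    have h4 : s a ((a ⊓ bᶜ) ⊓ (a ⊓ cᶜ)) := hand _ _ _ h1' h2'
    exact rwk _ _ _ h4 (le_inf (inf_le_left.trans (le_inf inf_le_left inf_le_right))
      (inf_le_right.trans inf_le_right))
  · -- s a b ↔ MaxInfer (Prel s) a b
    intro a b
    constructor
    · -- forward
      intro hab F hF
      set x : B := aᶜ ⊔ b with hx
      set G : Set B := {g | ∃ f ∈ F, Prel s (f ⊓ x) g} with hG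
      obtain ⟨⟨⟨hne, hproper, hup, hmeet⟩, hcoh⟩, hmax⟩ := hF
      have hFG : F ⊆ G := fun f hf => ⟨f, hf, rdom hs inf_le_left⟩
      have hGcoh : G ⊆ Coh (Prel s) a := by
        rintro g ⟨f, hf, hfg⟩ hgbad
        have : Prel s (f ⊓ x) aᶜ := rtrans hs hfg hgbad
        exact hcoh hf (lemA hs hab this)
      have hGfilter : IsEntFilter (Prel s) G := by
        refine ⟨hne.mono hFG, ?_, ?_, ?_⟩
        · intro h
          exact bot_not_coh hs a (hGcoh (h ▸ Set.mem_univ ⊥))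
        · rintro g g' ⟨f, hf, hfg⟩ hgg'
          exact ⟨f, hf, rtrans hs hfg hgg'⟩
        · rintro g g' ⟨f, hf, hfg⟩ ⟨f', hf', hfg'⟩
          refine ⟨f ⊓ f', hmeet _ _ hf hf', rconj hs ?_ ?_⟩
          · exact rtrans hs (rdom hs (inf_le_inf_right x inf_le_left)) hfg
          · exact rtrans hs (rdom hs (inf_le_inf_right x inf_le_right)) hfg'
      have hFeq : F = G := hmax G ⟨hGfilter, hGcoh⟩ hFG
      obtain ⟨f0, hf0⟩ := hne
      have hxG : x ∈ G := ⟨f0, hf0, rdom hs inf_le_right⟩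
      refine ⟨x, hFeq ▸ hxG, ?_⟩
      rw [hx, inf_sup_right]
      simp
    · -- backward
      intro hmi
      by_contra hnab
      set F₁ : Set B := {g | Prel s (aᶜ ⊔ bᶜ) g} with hF₁
      have hF₁base : F₁ ∈ entBase (Prel s) a := by
        have hcoh : F₁ ⊆ Coh (Prel s) a := by
          intro g hg hbad
          exact hnab (key1 hs (rtrans hs hg hbad))
        refine ⟨⟨⟨aᶜ ⊔ bᶜ, rdom hs le_rfl⟩, ?_, ?_, ?_⟩, hcoh⟩
        · intro h
          exact bot_not_coh hs a (hcoh (h ▸ Set.mem_univ ⊥))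
        · exact fun g g' hg hgg' => rtrans hs hg hgg'
        · exact fun g g' hg hg' => rconj hs hg hg'
      have hchainH : ∀ c ⊆ entBase (Prel s) a, IsChain (· ⊆ ·) c → c.Nonempty →
          ∃ ub ∈ entBase (Prel s) a, ∀ t ∈ c, t ⊆ ub := by
        intro c hc hchain hne
        refine ⟨⋃₀ c, ?_, fun t ht => Set.subset_sUnion_of_mem ht⟩
        obtain ⟨t0, ht0⟩ := hne
        obtain ⟨⟨hne0, _, _, _⟩, _⟩ := hc ht0
        have hcohU : ⋃₀ c ⊆ Coh (Prel s) a := by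
          rintro g ⟨t, ht, hg⟩
          exact (hc ht).2 hg
        refine ⟨⟨?_, ?_, ?_, ?_⟩, hcohU⟩
        · obtain ⟨g, hg⟩ := hne0
          exact ⟨g, t0, ht0, hg⟩
        · intro h
          exact bot_not_coh hs a (hcohU (h ▸ Set.mem_univ ⊥))
        · rintro g g' ⟨t, ht, hg⟩ hgg'
          exact ⟨t, ht, (hc ht).1.2.2.1 _ _ hg hgg'⟩
        · rintro g g' ⟨t, ht, hg⟩ ⟨t', ht', hg'⟩
          rcases hchain.total ht ht' with h | h
          · exact ⟨t', ht', (hc ht').1.2.2.2 _ _ (h hg) hg'⟩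
          · exact ⟨t, ht, (hc ht).1.2.2.2 _ _ hg (h hg')⟩
      obtain ⟨M, hF₁M, hMmem, hMmax⟩ :=
        zorn_subset_nonempty (entBase (Prel s) a) hchainH F₁ hF₁base
      have hMmaxbase : M ∈ entMaxBase (Prel s) a :=
        ⟨hMmem, fun F' hF' hMF' => Set.Subset.antisymm hMF' (hMmax hF' hMF')⟩
      obtain ⟨f, hfM, hfab⟩ := hmi M hMmaxbase
      have hfle : f ≤ aᶜ ⊔ b := by
        rw [sup_comm, ← himp_eq]
        exact le_himp_iff.mpr hfab
      have hxM : aᶜ ⊔ b ∈ M := hMmem.1.2.2.1 _ _ hfM (rdom hs hfle)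
      have hyM : aᶜ ⊔ bᶜ ∈ M := hF₁M (rdom hs le_rfl)
      have hmeetM : (aᶜ ⊔ bᶜ) ⊓ (aᶜ ⊔ b) ∈ M := hMmem.1.2.2.2 _ _ hyM hxM
      have e : (aᶜ ⊔ bᶜ) ⊓ (aᶜ ⊔ b) = aᶜ := by
        rw [← sup_inf_left]; simp
      rw [e] at hmeetM
      exact compl_not_coh hs a (hMmem.2 hmeetM)
end
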